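/- Let J be any subset of the positive integers, let S = {(1,0),(0,1)} ∪ {(a,a) : a ∈ J}, let p_n be the number of Catalan S-paths from (0,0) to (n,n), let P(t) = Σ_{n≥0} p_n tⁿ ∈ ℚ⟦t⟧, and let T_J(t) = Σ_{a∈J} tᵃ ∈ ℚ⟦t⟧. Then P satisfies the quadratic equation t·P(t)² − (1 − T_J(t))·P(t) + 1 = 0 in ℚ⟦t⟧ (equivalently, P(t) = (1 − T_J(t) − √((1 − T_J(t))² − 4t))/(2t)). -/

import Mathlib

/-- x-coordinate of the `j`-th node of the path `p` (partial sum of first coordinates). -/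
def xPart (p : List (ℕ × ℕ)) (j : ℕ) : ℕ := ((p.take j).map Prod.fst).sum

/-- y-coordinate of the `j`-th node of the path `p` (partial sum of second coordinates). -/
def yPart (p : List (ℕ × ℕ)) (j : ℕ) : ℕ := ((p.take j).map Prod.snd).sum

/-- `p` is an `S`-path from `(0,0)` to `(n,m)`. -/
def IsPath (S : Set (ℕ × ℕ)) (n m : ℕ) (p : List (ℕ × ℕ)) : Prop :=
  (∀ st ∈ p, st ∈ S) ∧ xPart p p.length = n ∧ yPart p p.length = m

/-- `p` is Catalan: every node `(x, y)` satisfies `x ≤ y`. -/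
def IsCatalan (p : List (ℕ × ℕ)) : Prop :=
  ∀ j ≤ p.length, xPart p j ≤ yPart p j

/-- The number of `S`-paths from `(0,0)` to `(n,m)`. -/
noncomputable def aCount (S : Set (ℕ × ℕ)) (n m : ℕ) : ℕ :=
  Set.ncard {p : List (ℕ × ℕ) | IsPath S n m p}

/-- The number of Catalan `S`-paths from `(0,0)` to `(n,n)`. -/
noncomputable def pCatalan (S : Set (ℕ × ℕ)) (n : ℕ) : ℕ :=
  Set.ncard {p : List (ℕ × ℕ) | IsPath S n n p ∧ IsCatalan p}
/-! A Catalan path ending on the diagonal is either empty, or starts with a diagonal step `(a, a)`,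
`a ∈ J`, followed by a Catalan path, or starts with `(0, 1)`; in the last case it returns to the
diagonal for the first time through an east step `(1, 0)`, which splits it uniquely as
`(0, 1) q (1, 0) r` with `q`, `r` Catalan paths ending on the diagonal. Hence `p₀ = 1` and
`p_{n+1} = ∑_{a ∈ J} p_{n+1-a} + ∑_{i+j=n} p_i p_j`, i.e. `P = 1 + T_J P + t P²`. -/

open Finset

section Nodes

variable (s : ℕ × ℕ) (p q r : List (ℕ × ℕ))

@[simp] lemma xPart_zero : xPart p 0 = 0 := rfl

@[simp] lemma yPart_zero : yPart p 0 = 0 := rfl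

@[simp] lemma xPart_cons_succ (j : ℕ) : xPart (s :: p) (j + 1) = s.1 + xPart p j := by
  simp [xPart]

@[simp] lemma yPart_cons_succ (j : ℕ) : yPart (s :: p) (j + 1) = s.2 + yPart p j := by
  simp [yPart]

lemma xPart_append_of_le {j : ℕ} (h : j ≤ q.length) : xPart (q ++ r) j = xPart q j := by
  simp [xPart, List.take_append_of_le_length h]

lemma yPart_append_of_le {j : ℕ} (h : j ≤ q.length) : yPart (q ++ r) j = yPart q j := by
  simp [yPart, List.take_append_of_le_length h]

lemma xPart_append_length_add (t : ℕ) :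
    xPart (q ++ r) (q.length + t) = xPart q q.length + xPart r t := by
  simp [xPart, List.take_append, List.take_of_length_le]

lemma yPart_append_length_add (t : ℕ) :
    yPart (q ++ r) (q.length + t) = yPart q q.length + yPart r t := by
  simp [yPart, List.take_append, List.take_of_length_le]

lemma xPart_length : xPart p p.length = (p.map Prod.fst).sum := by
  simp [xPart]

lemma yPart_length : yPart p p.length = (p.map Prod.snd).sum := by
  simp [yPart]

end Nodes

section Catalan

variable {s : ℕ × ℕ} {p q r : List (ℕ × ℕ)}

lemma isCatalan_nil : IsCatalan [] := by
  simp [IsCatalan]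

lemma isCatalan_append_iff :
    IsCatalan (q ++ r) ↔ IsCatalan q ∧
      ∀ t ≤ r.length, xPart q q.length + xPart r t ≤ yPart q q.length + yPart r t := by
  constructor
  · intro h
    refine ⟨fun j hj => ?_, fun t ht => ?_⟩
    · simpa [xPart_append_of_le _ _ hj, yPart_append_of_le _ _ hj] using
        h j (by simp; omega)
    · simpa [xPart_append_length_add, yPart_append_length_add] using
        h (q.length + t) (by simp; omega)
  · rintro ⟨hq, hr⟩ j hj
    rcases le_or_gt j q.length with h | h
    · rw [xPart_append_of_le _ _ h, yPart_append_of_le _ _ h]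
      exact hq j h
    · obtain ⟨t, rfl⟩ := Nat.exists_eq_add_of_le h.le
      rw [xPart_append_length_add, yPart_append_length_add]
      exact hr t (by simp at hj; omega)

lemma isCatalan_append_of_balanced (hq : xPart q q.length = yPart q q.length) :
    IsCatalan (q ++ r) ↔ IsCatalan q ∧ IsCatalan r := by
  rw [isCatalan_append_iff, hq]
  simp only [Nat.add_le_add_iff_left]
  rfl

lemma isCatalan_append_singleton :
    IsCatalan (q ++ [s]) ↔ IsCatalan q ∧ xPart q q.length + s.1 ≤ yPart q q.length + s.2 := by
  rw [isCatalan_append_iff]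
  refine and_congr_right fun hq => ⟨fun h => by simpa using h 1 le_rfl, fun h t ht => ?_⟩
  obtain rfl | rfl : t = 0 ∨ t = 1 := by simp at ht; omega
  · simpa using hq _ le_rfl
  · simpa using h

lemma isCatalan_cons_of_le (hs : s.1 ≤ s.2) (hp : IsCatalan p) : IsCatalan (s :: p) := by
  rintro (_ | j) hj
  · simp
  · simpa using Nat.add_le_add hs (hp j (by simpa using hj))

lemma isCatalan_diag_cons_iff (a : ℕ) : IsCatalan ((a, a) :: p) ↔ IsCatalan p := by
  have h := isCatalan_append_of_balanced (q := [(a, a)]) (r := p) (by simp)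
  simpa [isCatalan_cons_of_le (s := (a, a)) le_rfl isCatalan_nil] using h

lemma not_isCatalan_east_cons : ¬ IsCatalan ((1, 0) :: p) := fun h => by
  simpa using h 1 (by simp)

lemma not_isCatalan_append_east_cons (hq : xPart q q.length = yPart q q.length) :
    ¬ IsCatalan (q ++ (1, 0) :: r) := by
  rw [isCatalan_append_of_balanced hq]
  exact fun h => not_isCatalan_east_cons h.2

lemma isCatalan_north_cons_append_east_cons_iff (hq : xPart q q.length = yPart q q.length) :
    IsCatalan ((0, 1) :: (q ++ (1, 0) :: r)) ↔ IsCatalan ((0, 1) :: q) ∧ IsCatalan r := by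
  rw [xPart_length, yPart_length] at hq
  have hsplit : (0, 1) :: (q ++ (1, 0) :: r) = ((0, 1) :: q ++ [(1, 0)]) ++ r := by simp
  rw [hsplit, isCatalan_append_of_balanced (by rw [xPart_length, yPart_length]; simp [hq]; omega),
    isCatalan_append_singleton]
  simp [xPart_length, yPart_length, hq]

lemma exists_eq_append_cons_of_not_isCatalan (h : ¬ IsCatalan p) :
    ∃ q s r, p = q ++ s :: r ∧ IsCatalan q ∧ yPart q q.length + s.2 < xPart q q.length + s.1 := by
  induction p using List.reverseRecOn with
  | nil => exact absurd isCatalan_nil h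
  | append_singleton v s ih =>
    by_cases hv : IsCatalan v
    · rw [isCatalan_append_singleton, not_and, not_le] at h
      exact ⟨v, s, [], rfl, hv, h hv⟩
    · obtain ⟨q, s', r, rfl, hq, hlt⟩ := ih hv
      exact ⟨q, s', r ++ [s], by simp, hq, hlt⟩

lemma eq_and_eq_of_append_east_cons_eq {q' r' : List (ℕ × ℕ)}
    (hq : IsCatalan q) (hq_bal : xPart q q.length = yPart q q.length)
    (hq' : IsCatalan q') (hq'_bal : xPart q' q'.length = yPart q' q'.length)
    (h : q ++ (1, 0) :: r = q' ++ (1, 0) :: r') : q = q' ∧ r = r' := by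
  rcases List.append_eq_append_iff.mp h with ⟨_ | ⟨b, w⟩, rfl, hw⟩ | ⟨_ | ⟨b, w⟩, rfl, hw⟩
  · simpa using hw
  · obtain ⟨rfl, -⟩ := List.cons_eq_cons.mp hw
    exact absurd hq' (not_isCatalan_append_east_cons hq_bal)
  · simpa using hw.symm
  · obtain ⟨rfl, -⟩ := List.cons_eq_cons.mp hw
    exact absurd hq (not_isCatalan_append_east_cons hq'_bal)

end Catalan

section Paths

variable {S : Set (ℕ × ℕ)} {n m : ℕ} {p : List (ℕ × ℕ)}

lemma isPath_iff :
    IsPath S n m p ↔ (∀ st ∈ p, st ∈ S) ∧ (p.map Prod.fst).sum = n ∧ (p.map Prod.snd).sum = m := by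
  rw [IsPath, xPart_length, yPart_length]

lemma List.finite_length_le_of_forall_mem {α : Type*} {s : Set α} (hs : s.Finite) (N : ℕ) :
    {l : List α | l.length ≤ N ∧ ∀ x ∈ l, x ∈ s}.Finite := by
  have := hs.to_subtype
  refine ((List.finite_length_le s N).image (List.map Subtype.val)).subset ?_
  rintro l ⟨hlen, hmem⟩
  lift l to List s using hmem
  exact ⟨l, by simpa using hlen, rfl⟩

lemma IsPath.length_le (hS : (0, 0) ∉ S) (hp : IsPath S n m p) : p.length ≤ n + m := by
  obtain ⟨hmem, hx, hy⟩ := isPath_iff.mp hp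
  have hpos : ∀ k ∈ p.map fun s => s.1 + s.2, 1 ≤ k := by
    simp only [List.mem_map]
    rintro _ ⟨⟨a, b⟩, hs, rfl⟩
    by_contra! h0
    obtain ⟨rfl, rfl⟩ : a = 0 ∧ b = 0 := by omega
    exact hS (hmem _ hs)
  calc p.length = (p.map fun s => s.1 + s.2).length := (List.length_map _).symm
    _ ≤ (p.map fun s => s.1 + s.2).sum := List.length_le_sum_of_one_le _ hpos
    _ = n + m := by rw [List.sum_map_add, hx, hy]

lemma setOf_isPath_finite (hS : (0, 0) ∉ S) (n m : ℕ) : {p | IsPath S n m p}.Finite := by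
  refine (List.finite_length_le_of_forall_mem
    ((Set.finite_Iic n).prod (Set.finite_Iic m)) (n + m)).subset fun p hp => ?_
  obtain ⟨-, hx, hy⟩ := isPath_iff.mp hp
  exact ⟨hp.length_le hS, fun s hs =>
    ⟨hx ▸ List.le_sum_of_mem (List.mem_map_of_mem (f := Prod.fst) hs),
      hy ▸ List.le_sum_of_mem (List.mem_map_of_mem (f := Prod.snd) hs)⟩⟩

def catalanPaths (S : Set (ℕ × ℕ)) (n : ℕ) : Set (List (ℕ × ℕ)) :=
  {p | IsPath S n n p ∧ IsCatalan p}

lemma xPart_eq_yPart_of_mem_catalanPaths (hp : p ∈ catalanPaths S n) :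
    xPart p p.length = yPart p p.length :=
  hp.1.2.1.trans hp.1.2.2.symm

lemma eq_and_eq_of_append_east_cons_eq_of_mem_catalanPaths {i i' : ℕ} {q q' r r' : List (ℕ × ℕ)}
    (hq : q ∈ catalanPaths S i) (hq' : q' ∈ catalanPaths S i')
    (h : q ++ (1, 0) :: r = q' ++ (1, 0) :: r') : i = i' ∧ q = q' ∧ r = r' := by
  obtain ⟨rfl, rfl⟩ := eq_and_eq_of_append_east_cons_eq hq.2
    (xPart_eq_yPart_of_mem_catalanPaths hq) hq'.2 (xPart_eq_yPart_of_mem_catalanPaths hq') h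
  exact ⟨hq.1.2.1.symm.trans hq'.1.2.1, rfl, rfl⟩

lemma catalanPaths_finite (hS : (0, 0) ∉ S) (n : ℕ) : (catalanPaths S n).Finite :=
  (setOf_isPath_finite hS n n).subset fun _ hp => hp.1

lemma pCatalan_zero (hS : (0, 0) ∉ S) : pCatalan S 0 = 1 := by
  suffices catalanPaths S 0 = {[]} from Set.ncard_eq_one.mpr ⟨[], this⟩
  ext p
  refine ⟨fun hp => List.length_eq_zero_iff.mp (Nat.le_zero.mp (hp.1.length_le hS)), ?_⟩
  rintro rfl
  exact ⟨isPath_iff.mpr (by simp), isCatalan_nil⟩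

end Paths

def schroderSteps (J : Set ℕ) : Set (ℕ × ℕ) :=
  {(1, 0), (0, 1)} ∪ {st | ∃ a ∈ J, st = (a, a)}

section Schroder

variable {J : Set ℕ} {n : ℕ} {p q r u : List (ℕ × ℕ)}

lemma mem_schroderSteps {s : ℕ × ℕ} :
    s ∈ schroderSteps J ↔ s = (1, 0) ∨ s = (0, 1) ∨ ∃ a ∈ J, s = (a, a) := by
  simp [schroderSteps, or_assoc]

@[simp] lemma east_mem_schroderSteps : (1, 0) ∈ schroderSteps J := by
  simp [mem_schroderSteps]

@[simp] lemma north_mem_schroderSteps : (0, 1) ∈ schroderSteps J := by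
  simp [mem_schroderSteps]

lemma diag_mem_schroderSteps {a : ℕ} (ha : a ∈ J) : (a, a) ∈ schroderSteps J :=
  mem_schroderSteps.mpr (Or.inr (Or.inr ⟨a, ha, rfl⟩))

lemma zero_notMem_schroderSteps (hJ : 0 ∉ J) : (0, 0) ∉ schroderSteps J := by
  simpa [mem_schroderSteps] using hJ

local notation "𝒞" => catalanPaths (schroderSteps J)

lemma diag_cons_mem_catalanPaths {a b : ℕ} (ha : a ∈ J) (hq : q ∈ 𝒞 b) :
    (a, a) :: q ∈ 𝒞 (a + b) := by
  obtain ⟨hpath, hcat⟩ := hq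
  obtain ⟨hmem, hx, hy⟩ := isPath_iff.mp hpath
  refine ⟨isPath_iff.mpr ⟨?_, by simp [hx], by simp [hy]⟩, (isCatalan_diag_cons_iff a).mpr hcat⟩
  simp only [List.mem_cons, forall_eq_or_imp]
  exact ⟨diag_mem_schroderSteps ha, hmem⟩

lemma north_cons_append_east_cons_mem_catalanPaths {i j : ℕ} (hq : q ∈ 𝒞 i) (hr : r ∈ 𝒞 j) :
    (0, 1) :: (q ++ (1, 0) :: r) ∈ 𝒞 (i + j + 1) := by
  have hqbal := xPart_eq_yPart_of_mem_catalanPaths hq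
  obtain ⟨hqpath, hqcat⟩ := hq
  obtain ⟨hrpath, hrcat⟩ := hr
  obtain ⟨hqmem, hqx, hqy⟩ := isPath_iff.mp hqpath
  obtain ⟨hrmem, hrx, hry⟩ := isPath_iff.mp hrpath
  refine ⟨isPath_iff.mpr ⟨?_, by simp [hqx, hrx]; omega, by simp [hqy, hry]; omega⟩, ?_⟩
  · simp only [List.mem_cons, List.mem_append]
    rintro s (rfl | hs | rfl | hs)
    exacts [north_mem_schroderSteps, hqmem s hs, east_mem_schroderSteps, hrmem s hs]
  · exact (isCatalan_north_cons_append_east_cons_iff hqbal).mpr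
      ⟨isCatalan_cons_of_le zero_le_one hqcat, hrcat⟩

lemma exists_eq_append_east_cons_of_north_cons_mem_catalanPaths (h : (0, 1) :: u ∈ 𝒞 (n + 1)) :
    ∃ i j, i + j = n ∧ ∃ q ∈ 𝒞 i, ∃ r ∈ 𝒞 j, u = q ++ (1, 0) :: r := by
  obtain ⟨hpath, hcat⟩ := h
  obtain ⟨hmem, hx, hy⟩ := isPath_iff.mp hpath
  simp only [List.map_cons, List.sum_cons, zero_add] at hx hy
  have hu : ¬ IsCatalan u := fun hu => by
    simpa [xPart_length, yPart_length, hx, ← hy] using hu u.length le_rfl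
  -- `u` ends below the diagonal while `(0, 1) :: u` never does, so `u` first leaves `x ≤ y`
  -- by a step from the diagonal to one unit below it, which among Schröder steps is `(1, 0)`.
  obtain ⟨q, s, r, rfl, hq, hexit⟩ := exists_eq_append_cons_of_not_isCatalan hu
  have hq_end := hq q.length le_rfl
  have hback := hcat (q.length + 1 + 1) (by simp)
  simp only [xPart_cons_succ, yPart_cons_succ, xPart_append_length_add,
    yPart_append_length_add, xPart_zero, yPart_zero] at hback
  obtain rfl : s = (1, 0) := by
    rcases mem_schroderSteps.mp (hmem s (by simp)) with hs | rfl | ⟨a, -, rfl⟩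
    · exact hs
    all_goals simp at hexit; omega
  have hbal : xPart q q.length = yPart q q.length := by simp at hexit hback; omega
  have hr := ((isCatalan_north_cons_append_east_cons_iff hbal).mp hcat).2
  rw [xPart_length, yPart_length] at hbal
  have hmem' : ∀ st ∈ q ++ (1, 0) :: r, st ∈ schroderSteps J := fun st hst => hmem st (by simp [hst])
  simp only [List.mem_append, List.mem_cons] at hmem'
  simp only [List.map_append, List.map_cons, List.sum_append, List.sum_cons] at hx hy
  refine ⟨(q.map Prod.fst).sum, (r.map Prod.fst).sum, by omega, q,
    ⟨isPath_iff.mpr ⟨fun st hst => hmem' st (Or.inl hst), rfl, hbal.symm⟩, hq⟩, r,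
    ⟨isPath_iff.mpr ⟨fun st hst => hmem' st (Or.inr (Or.inr hst)), rfl, by omega⟩, hr⟩, rfl⟩

lemma mem_catalanPaths_succ_cases (h : p ∈ 𝒞 (n + 1)) :
    (∃ a b, a + b = n + 1 ∧ a ∈ J ∧ ∃ q ∈ 𝒞 b, p = (a, a) :: q) ∨
      ∃ i j, i + j = n ∧ ∃ q ∈ 𝒞 i, ∃ r ∈ 𝒞 j, p = (0, 1) :: (q ++ (1, 0) :: r) := by
  rcases p with _ | ⟨s, u⟩
  · simp [catalanPaths, isPath_iff] at h
  obtain ⟨hpath, hcat⟩ := h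
  obtain ⟨hmem, hx, hy⟩ := isPath_iff.mp hpath
  rcases mem_schroderSteps.mp (hmem s (by simp)) with rfl | rfl | ⟨a, ha, rfl⟩
  · exact absurd hcat not_isCatalan_east_cons
  · obtain ⟨i, j, hij, q, hq, r, hr, rfl⟩ :=
      exists_eq_append_east_cons_of_north_cons_mem_catalanPaths ⟨hpath, hcat⟩
    exact Or.inr ⟨i, j, hij, q, hq, r, hr, rfl⟩
  · simp only [List.map_cons, List.sum_cons] at hx hy
    refine Or.inl ⟨a, (u.map Prod.fst).sum, hx, ha, u, ⟨isPath_iff.mpr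
      ⟨fun st hst => hmem st (by simp [hst]), rfl, by omega⟩, (isCatalan_diag_cons_iff a).mp hcat⟩, rfl⟩

lemma pCatalan_succ (hJ : 0 ∉ J) [DecidablePred (· ∈ J)] (n : ℕ) :
    pCatalan (schroderSteps J) (n + 1) =
      (∑ ab ∈ antidiagonal (n + 1), if ab.1 ∈ J then pCatalan (schroderSteps J) ab.2 else 0) +
        ∑ ij ∈ antidiagonal n, pCatalan (schroderSteps J) ij.1 * pCatalan (schroderSteps J) ij.2 := by
  have hfin := catalanPaths_finite (zero_notMem_schroderSteps hJ)
  set C : ℕ → Finset (List (ℕ × ℕ)) := fun m => (hfin m).toFinset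
  have hC : ∀ m, pCatalan (schroderSteps J) m = #(C m) := fun m =>
    Set.ncard_eq_toFinset_card _ (hfin m)
  set X := ((antidiagonal (n + 1)).filter (·.1 ∈ J)).sigma fun ab => C ab.2
  set Y := (antidiagonal n).sigma fun ij => C ij.1 ×ˢ C ij.2
  let glue : (Σ _ : ℕ × ℕ, List (ℕ × ℕ)) ⊕ (Σ _ : ℕ × ℕ, List (ℕ × ℕ) × List (ℕ × ℕ)) →
      List (ℕ × ℕ) :=
    Sum.elim (fun x => (x.1.1, x.1.1) :: x.2) fun y => (0, 1) :: (y.2.1 ++ (1, 0) :: y.2.2)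
  have himage : C (n + 1) = (X.disjSum Y).image glue := by
    ext p
    simp only [C, X, Y, glue, Set.Finite.mem_toFinset, mem_image, Sum.exists, inl_mem_disjSum,
      inr_mem_disjSum, mem_sigma, mem_filter, HasAntidiagonal.mem_antidiagonal, mem_product,
      Sum.elim_inl, Sum.elim_inr, Sigma.exists, Prod.exists]
    constructor
    · rintro hp
      rcases mem_catalanPaths_succ_cases hp with ⟨a, b, hab, ha, q, hq, rfl⟩ |
        ⟨i, j, hij, q, hq, r, hr, rfl⟩
      · exact Or.inl ⟨a, b, q, ⟨⟨hab, ha⟩, hq⟩, rfl⟩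
      · exact Or.inr ⟨i, j, q, r, ⟨hij, hq, hr⟩, rfl⟩
    · rintro (⟨a, b, q, ⟨⟨hab, ha⟩, hq⟩, rfl⟩ | ⟨i, j, q, r, ⟨hij, hq, hr⟩, rfl⟩)
      · exact hab ▸ diag_cons_mem_catalanPaths ha hq
      · exact hij ▸ north_cons_append_east_cons_mem_catalanPaths hq hr
  have hinj : Set.InjOn glue (X.disjSum Y) := by
    rintro (⟨⟨a, b⟩, q⟩ | ⟨⟨i, j⟩, q, r⟩) h₁ (⟨⟨a', b'⟩, q'⟩ | ⟨⟨i', j'⟩, q', r'⟩) h₂ heq <;>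
    simp only [X, Y, C, glue, mem_coe, inl_mem_disjSum, inr_mem_disjSum, mem_sigma, mem_filter,
      HasAntidiagonal.mem_antidiagonal, mem_product, Set.Finite.mem_toFinset, Sum.elim_inl,
      Sum.elim_inr, List.cons.injEq, Prod.mk.injEq] at h₁ h₂ heq
    · obtain ⟨⟨rfl, -⟩, rfl⟩ := heq
      obtain rfl : b = b' := by omega
      rfl
    · omega
    · omega
    · obtain ⟨rfl, rfl, rfl⟩ :=
        eq_and_eq_of_append_east_cons_eq_of_mem_catalanPaths h₁.2.1 h₂.2.1 heq.2
      obtain rfl : j = j' := by omega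
      rfl
  rw [hC, himage, card_image_of_injOn hinj, card_disjSum, card_sigma, card_sigma, sum_filter]
  simp [hC, card_product]

end Schroder

lemma catalanSeries_eq {R : Type*} [CommSemiring R] {J : Set ℕ} [DecidablePred (· ∈ J)]
    (hJ : 0 ∉ J) :
    PowerSeries.mk (fun n => (pCatalan (schroderSteps J) n : R)) =
      1 + PowerSeries.mk (fun a => if a ∈ J then (1 : R) else 0) *
          PowerSeries.mk (fun n => (pCatalan (schroderSteps J) n : R)) +
        PowerSeries.X * PowerSeries.mk (fun n => (pCatalan (schroderSteps J) n : R)) ^ 2 := by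
  ext (_ | n)
  · simp [pCatalan_zero (zero_notMem_schroderSteps hJ), hJ]
  · rw [PowerSeries.coeff_mk, pCatalan_succ hJ n, map_add, map_add, PowerSeries.coeff_succ_X_mul]
    simp [PowerSeries.coeff_mul, pow_two, ite_mul]

open Classical in
theorem stmt8 (J : Set ℕ) (hJ : ∀ a ∈ J, 1 ≤ a)
    (S : Set (ℕ × ℕ))
    (hS : S = ({(1, 0), (0, 1)} : Set (ℕ × ℕ)) ∪ {st | ∃ a ∈ J, st = (a, a)})
    (P TJ : PowerSeries ℚ)
    (hP : P = PowerSeries.mk fun n => (pCatalan S n : ℚ))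
    (hT : TJ = PowerSeries.mk fun a => if a ∈ J then 1 else 0) :
    PowerSeries.X * P ^ 2 - (1 - TJ) * P + 1 = 0 := by
  have hJ0 : 0 ∉ J := fun h => absurd (hJ 0 h) (by norm_num)
  obtain rfl : S = schroderSteps J := hS
  subst hP hT
  linear_combination -catalanSeries_eq (R := ℚ) hJ0
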